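/- Subject reduction for λ•→: if Γ ⊢ e : t is derivable in λ•→ and e ⟶ e', then Γ ⊢ e' : t is derivable. -/

import Mathlib

namespace LambdaBullet

/-- Head constructors for pseudo-types. -/
inductive TyHead : Type
  | var (n : ℕ)
  | nat
  | prod
  | arrow
  | bullet

/-- Arity of each pseudo-type constructor. -/
def tyArity : TyHead → Type
  | .var _ => Empty
  | .nat => Empty
  | .prod => Bool
  | .arrow => Bool
  | .bullet => Unit

/-- The polynomial functor whose M-type is the type of pseudo-types. -/
def TyP : PFunctor := ⟨TyHead, tyArity⟩

/-- Pseudo-types: possibly infinite coinductively generated trees. -/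
abbrev PseudoType := TyP.M

/-- Type variable. -/
def tvar (n : ℕ) : PseudoType := PFunctor.M.mk ⟨TyHead.var n, Empty.elim⟩
/-- The type `Nat`. -/
def tnat : PseudoType := PFunctor.M.mk ⟨TyHead.nat, Empty.elim⟩
/-- Product type. -/
def tprod (t s : PseudoType) : PseudoType :=
  PFunctor.M.mk ⟨TyHead.prod, fun b => bif b then s else t⟩
/-- Arrow type. -/
def tarrow (t s : PseudoType) : PseudoType :=
  PFunctor.M.mk ⟨TyHead.arrow, fun b => bif b then s else t⟩
/-- Delay type `•t`. -/
def tbullet (t : PseudoType) : PseudoType :=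
  PFunctor.M.mk ⟨TyHead.bullet, fun _ => t⟩
/-- Iterated delay `•ⁿ t`. -/
def tbulletN (n : ℕ) (t : PseudoType) : PseudoType := tbullet^[n] t

/-- `Child t s` holds iff `s` is an immediate subtree of `t`. -/
def Child (t s : PseudoType) : Prop := ∃ b : TyP.B t.dest.1, t.dest.2 b = s

/-- `Subtree t s` holds iff `s` is a subtree of `t`. -/
def Subtree (t s : PseudoType) : Prop := Relation.ReflTransGen Child t s

/-- A pseudo-type is regular if it has finitely many distinct subtrees. -/
def Regular (t : PseudoType) : Prop := {s | Subtree t s}.Finite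

/-- The root of the tree is a `•`. -/
def headIsBullet (t : PseudoType) : Prop := t.dest.1 = TyHead.bullet

/-- A pseudo-type is guarded if every infinite path in its tree has
infinitely many `•`'s. -/
def Guarded (t : PseudoType) : Prop :=
  ∀ f : ℕ → PseudoType, f 0 = t → (∀ n, Child (f n) (f (n + 1))) →
    ∀ N, ∃ n, N ≤ n ∧ headIsBullet (f n)

/-- A type is a regular and guarded pseudo-type. -/
def IsType (t : PseudoType) : Prop := Regular t ∧ Guarded t

/-- `•^∞`: the unique pseudo-type satisfying `•^∞ = • •^∞`. -/
def binf : PseudoType := PFunctor.M.corec (fun _ : Unit => ⟨TyHead.bullet, fun _ => ()⟩) ()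

/-- Constants. -/
inductive Const : Type
  | pair
  | cfst
  | csnd
  | zero
  | succ

/-- Expressions (with de Bruijn indices for variables). -/
inductive Expr : Type
  | var (x : ℕ)
  | const (k : Const)
  | lam (e : Expr)
  | app (e₁ e₂ : Expr)

def liftRen (f : ℕ → ℕ) : ℕ → ℕ
  | 0 => 0
  | n + 1 => f n + 1

def rename (f : ℕ → ℕ) : Expr → Expr
  | .var n => .var (f n)
  | .const k => .const k
  | .lam e => .lam (rename (liftRen f) e)
  | .app a b => .app (rename f a) (rename f b)

def liftSub (ρ : ℕ → Expr) : ℕ → Expr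
  | 0 => .var 0
  | n + 1 => rename Nat.succ (ρ n)

/-- Simultaneous (capture-avoiding) substitution. -/
def substE (ρ : ℕ → Expr) : Expr → Expr
  | .var n => ρ n
  | .const k => .const k
  | .lam e => .lam (substE (liftSub ρ) e)
  | .app a b => .app (substE ρ a) (substE ρ b)

/-- `subst0 e f` is `e[f/x]` for the topmost variable `x`. -/
def subst0 (e f : Expr) : Expr :=
  substE (fun n => match n with | 0 => f | n + 1 => .var n) e

/-- The pair `⟨e₁, e₂⟩`. -/
def mkPair (e₁ e₂ : Expr) : Expr := .app (.app (.const .pair) e₁) e₂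

/-- Evaluation contexts E ::= [] | E e | fst E | snd E | succ E. -/
inductive ECtx : Type
  | hole
  | app (E : ECtx) (e : Expr)
  | fst (E : ECtx)
  | snd (E : ECtx)
  | succ (E : ECtx)

/-- Plugging an expression into an evaluation context. -/
def ECtx.plug : ECtx → Expr → Expr
  | .hole, e => e
  | .app E f, e => .app (E.plug e) f
  | .fst E, e => .app (.const .cfst) (E.plug e)
  | .snd E, e => .app (.const .csnd) (E.plug e)
  | .succ E, e => .app (.const .succ) (E.plug e)

/-- Head reduction rules. -/
inductive HeadRed : Expr → Expr → Prop
  | beta (e f) : HeadRed (.app (.lam e) f) (subst0 e f)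
  | fst (e₁ e₂) : HeadRed (.app (.const .cfst) (mkPair e₁ e₂)) e₁
  | snd (e₁ e₂) : HeadRed (.app (.const .csnd) (mkPair e₁ e₂)) e₂

/-- Weak head (call-by-name) reduction: head rules closed under evaluation contexts. -/
def Red (a b : Expr) : Prop :=
  ∃ (E : ECtx) (e f : Expr), HeadRed e f ∧ a = E.plug e ∧ b = E.plug f

/-- Many-step reduction. -/
def RedStar : Expr → Expr → Prop := Relation.ReflTransGen Red

/-- (Weak head) normal forms. -/
def NormalForm (e : Expr) : Prop := ∀ f, ¬ Red e f

/-- Typing contexts: finite maps from (de Bruijn) variables to types. -/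
def Ctx : Type := ℕ → Option PseudoType

/-- Extending a typing context with a type for the topmost variable. -/
def Ctx.cons (t : PseudoType) (Γ : Ctx) : Ctx :=
  fun n => match n with | 0 => some t | n + 1 => Γ n

/-- The type assignment κ for constants. -/
inductive KappaTy : Const → PseudoType → Prop
  | pair {t s} : IsType t → IsType s →
      KappaTy .pair (tarrow t (tarrow s (tprod t s)))
  | fst {t s} : IsType t → IsType s →
      KappaTy .cfst (tarrow (tprod t s) t)
  | snd {t s} : IsType t → IsType s →
      KappaTy .csnd (tarrow (tprod t s) s)
  | zero : KappaTy .zero tnat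
  | succ : KappaTy .succ (tarrow tnat tnat)

/-- The type assignment system λ•→. -/
inductive Types : Ctx → Expr → PseudoType → Prop
  | ax {Γ x t} : Γ x = some t → IsType t → Types Γ (.var x) t
  | const {Γ k t} : KappaTy k t → Types Γ (.const k) t
  | bulletI {Γ e t} : Types Γ e t → Types Γ e (tbullet t)
  | arrowI {Γ e n t s} :
      Types (Ctx.cons (tbulletN n t) Γ) e (tbulletN n s) →
      Types Γ (.lam e) (tbulletN n (tarrow t s))
  | arrowE {Γ e₁ e₂ n t s} :
      Types Γ e₁ (tbulletN n (tarrow t s)) → Types Γ e₂ (tbulletN n t) →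
      Types Γ (.app e₁ e₂) (tbulletN n s)

/-!
The usual syntactic argument: inversion lemmas for application, abstraction and constants,
substitution for β, and congruence under evaluation contexts. Two points are specific to λ•→.
Inverting a λ through the rule (•I) requires typing its body with the bound variable delayed; this
holds because a derivation of `Γ ⊢ e : t` yields `Γ' ⊢ e : •t` whenever `Γ'` delays some entries
of `Γ`. And the types produced by the different inversions are matched by reading `•ⁿ v`, with
`v` not headed by `•`, uniquely off the tree.
-/

lemma tbulletN_succ (n : ℕ) (t : PseudoType) :
    tbulletN (n + 1) t = tbullet (tbulletN n t) :=
  Function.iterate_succ_apply' _ _ _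

lemma tbullet_injective : Function.Injective tbullet := fun _ _ h =>
  congrFun (eq_of_heq (Sigma.mk.inj (PFunctor.M.mk_inj h)).2) ()

lemma tarrow_inj {t s t' s' : PseudoType} (h : tarrow t s = tarrow t' s') :
    t = t' ∧ s = s' :=
  have h' := eq_of_heq (Sigma.mk.inj (PFunctor.M.mk_inj h)).2
  ⟨congrFun h' false, congrFun h' true⟩

lemma tprod_inj {t s t' s' : PseudoType} (h : tprod t s = tprod t' s') :
    t = t' ∧ s = s' :=
  have h' := eq_of_heq (Sigma.mk.inj (PFunctor.M.mk_inj h)).2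
  ⟨congrFun h' false, congrFun h' true⟩

lemma headIsBullet_tbullet (t : PseudoType) : headIsBullet (tbullet t) := rfl

lemma not_headIsBullet_tarrow (t s : PseudoType) : ¬ headIsBullet (tarrow t s) := nofun

lemma not_headIsBullet_tprod (t s : PseudoType) : ¬ headIsBullet (tprod t s) := nofun

lemma tbulletN_inj_of_not_headIsBullet {n m : ℕ} {v w : PseudoType}
    (hv : ¬ headIsBullet v) (hw : ¬ headIsBullet w) (h : tbulletN n v = tbulletN m w) :
    n = m ∧ v = w := by
  induction n generalizing m with
  | zero =>
    cases m with
    | zero => exact ⟨rfl, h⟩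
    | succ m =>
      obtain rfl : v = _ := h.trans (tbulletN_succ m w)
      exact absurd (headIsBullet_tbullet _) hv
  | succ n ih =>
    cases m with
    | zero =>
      obtain rfl : w = _ := h.symm.trans (tbulletN_succ n v)
      exact absurd (headIsBullet_tbullet _) hw
    | succ m =>
      rw [tbulletN_succ, tbulletN_succ] at h
      obtain ⟨rfl, rfl⟩ := ih (tbullet_injective h)
      exact ⟨rfl, rfl⟩

lemma tbulletN_tarrow_inj {n m : ℕ} {t s t' s' : PseudoType}
    (h : tbulletN n (tarrow t s) = tbulletN m (tarrow t' s')) :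
    n = m ∧ t = t' ∧ s = s' :=
  have ⟨hn, h'⟩ := tbulletN_inj_of_not_headIsBullet (not_headIsBullet_tarrow _ _)
    (not_headIsBullet_tarrow _ _) h
  ⟨hn, tarrow_inj h'⟩

lemma tbulletN_tprod_inj {n m : ℕ} {t s t' s' : PseudoType}
    (h : tbulletN n (tprod t s) = tbulletN m (tprod t' s')) :
    n = m ∧ t = t' ∧ s = s' :=
  have ⟨hn, h'⟩ := tbulletN_inj_of_not_headIsBullet (not_headIsBullet_tprod _ _)
    (not_headIsBullet_tprod _ _) h
  ⟨hn, tprod_inj h'⟩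

lemma eq_of_child_tbullet {t s : PseudoType} (h : Child (tbullet t) s) : s = t :=
  h.elim fun _ hb => hb.symm

lemma IsType.bullet {t : PseudoType} (h : IsType t) : IsType (tbullet t) := by
  constructor
  · refine (h.1.insert (tbullet t)).subset fun s hs => ?_
    rcases Relation.ReflTransGen.cases_head hs with rfl | ⟨c, hc, hcs⟩
    · exact Set.mem_insert _ _
    · exact Or.inr (eq_of_child_tbullet hc ▸ hcs)
  · intro f hf0 hchild N
    have hf1 : f 1 = t := eq_of_child_tbullet (hf0 ▸ hchild 0)
    obtain ⟨n, hn, hb⟩ := h.2 (fun n => f (n + 1)) hf1 (fun n => hchild (n + 1)) N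
    exact ⟨n + 1, hn.trans n.le_succ, hb⟩

def Ctx.Delay (Γ Γ' : Ctx) : Prop :=
  ∀ x, Γ' x = Γ x ∨ Γ' x = (Γ x).map tbullet

lemma Ctx.Delay.refl (Γ : Ctx) : Γ.Delay Γ := fun _ => Or.inl rfl

lemma Ctx.Delay.cons {Γ Γ' : Ctx} (h : Γ.Delay Γ') (a : PseudoType) :
    (Γ.cons a).Delay (Γ'.cons (tbullet a))
  | 0 => Or.inr rfl
  | x + 1 => h x

namespace Types

variable {Γ : Ctx}

lemma delay {Γ' : Ctx} {e : Expr} {t : PseudoType} (h : Types Γ e t) (hΓ : Γ.Delay Γ') :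
    Types Γ' e (tbullet t) := by
  induction h generalizing Γ' with
  | ax hx ht =>
    rcases hΓ _ with hx' | hx'
    · exact .bulletI (.ax (hx'.trans hx) ht)
    · exact .ax (by rw [hx', hx]; rfl) ht.bullet
  | const hk => exact .bulletI (.const hk)
  | bulletI _ ih => exact .bulletI (ih hΓ)
  | @arrowI _ _ n t _ _ ih =>
    have h := ih (hΓ.cons (tbulletN n t))
    rw [← tbulletN_succ, ← tbulletN_succ] at h
    simpa only [tbulletN_succ] using h.arrowI
  | arrowE _ _ ih₁ ih₂ =>
    have h₁ := ih₁ hΓ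
    have h₂ := ih₂ hΓ
    rw [← tbulletN_succ] at h₁ h₂
    simpa only [tbulletN_succ] using h₁.arrowE h₂

lemma app_inv {e₁ e₂ : Expr} {u : PseudoType} (h : Types Γ (.app e₁ e₂) u) :
    ∃ n t s, u = tbulletN n s ∧ Types Γ e₁ (tbulletN n (tarrow t s)) ∧
      Types Γ e₂ (tbulletN n t) := by
  generalize he : Expr.app e₁ e₂ = e at h
  induction h with
  | ax | const | arrowI => cases he
  | bulletI _ ih =>
    obtain ⟨n, t, s, rfl, h₁, h₂⟩ := ih he
    refine ⟨n + 1, t, s, (tbulletN_succ n s).symm, ?_, ?_⟩ <;>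
      rw [tbulletN_succ] <;> exact .bulletI ‹_›
  | arrowE h₁ h₂ =>
    cases he
    exact ⟨_, _, _, rfl, h₁, h₂⟩

lemma lam_inv {e : Expr} {u : PseudoType} (h : Types Γ (.lam e) u) :
    ∃ n t s, u = tbulletN n (tarrow t s) ∧ Types (Γ.cons (tbulletN n t)) e (tbulletN n s) := by
  generalize he : Expr.lam e = e' at h
  induction h with
  | ax | const | arrowE => cases he
  | bulletI _ ih =>
    obtain ⟨n, t, s, rfl, h⟩ := ih he
    refine ⟨n + 1, t, s, (tbulletN_succ n _).symm, ?_⟩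
    rw [tbulletN_succ, tbulletN_succ]
    exact h.delay ((Ctx.Delay.refl _).cons _)
  | arrowI h =>
    cases he
    exact ⟨_, _, _, rfl, h⟩

lemma const_inv {k : Const} {u : PseudoType} (h : Types Γ (.const k) u) :
    ∃ n v, u = tbulletN n v ∧ KappaTy k v := by
  generalize he : Expr.const k = e at h
  induction h with
  | ax | arrowI | arrowE => cases he
  | const hk =>
    cases he
    exact ⟨0, _, rfl, hk⟩
  | bulletI _ ih =>
    obtain ⟨n, v, rfl, hk⟩ := ih he
    exact ⟨n + 1, v, (tbulletN_succ n v).symm, hk⟩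

lemma pair_inv {e₁ e₂ : Expr} {n : ℕ} {a b : PseudoType}
    (h : Types Γ (mkPair e₁ e₂) (tbulletN n (tprod a b))) :
    Types Γ e₁ (tbulletN n a) ∧ Types Γ e₂ (tbulletN n b) := by
  obtain ⟨n₂, t₂, s₂, hu₂, h₁₂, h₂⟩ := app_inv h
  obtain ⟨n₁, t₁, s₁, hu₁, hpair, h₁⟩ := app_inv h₁₂
  obtain ⟨_, _, hv, hk⟩ := const_inv hpair
  cases hk
  obtain ⟨rfl, rfl, rfl⟩ := tbulletN_tarrow_inj hv
  obtain ⟨rfl, rfl, rfl⟩ := tbulletN_tarrow_inj hu₁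
  obtain ⟨rfl, rfl, rfl⟩ := tbulletN_tprod_inj hu₂
  exact ⟨h₁, h₂⟩

lemma rename {Γ' : Ctx} {e : Expr} {t : PseudoType} {f : ℕ → ℕ} (h : Types Γ e t)
    (hf : ∀ x, Γ' (f x) = Γ x) : Types Γ' (LambdaBullet.rename f e) t := by
  induction h generalizing f Γ' with
  | ax hx ht => exact .ax ((hf _).trans hx) ht
  | const hk => exact .const hk
  | bulletI _ ih => exact .bulletI (ih hf)
  | arrowI _ ih =>
    refine .arrowI (ih fun x => ?_)
    cases x with
    | zero => rfl
    | succ x => exact hf x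
  | arrowE _ _ ih₁ ih₂ => exact .arrowE (ih₁ hf) (ih₂ hf)

lemma subst {Γ' : Ctx} {e : Expr} {t : PseudoType} {ρ : ℕ → Expr} (h : Types Γ e t)
    (hρ : ∀ x u, Γ x = some u → IsType u → Types Γ' (ρ x) u) : Types Γ' (substE ρ e) t := by
  induction h generalizing ρ Γ' with
  | ax hx ht => exact hρ _ _ hx ht
  | const hk => exact .const hk
  | bulletI _ ih => exact .bulletI (ih hρ)
  | arrowI _ ih =>
    refine .arrowI (ih fun x u hx hu => ?_)
    cases x with
    | zero =>
      cases hx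
      exact .ax rfl hu
    | succ x => exact (hρ x u hx hu).rename fun _ => rfl
  | arrowE _ _ ih₁ ih₂ => exact .arrowE (ih₁ hρ) (ih₂ hρ)

lemma subst0 {e f : Expr} {t s : PseudoType} (he : Types (Γ.cons t) e s) (hf : Types Γ f t) :
    Types Γ (LambdaBullet.subst0 e f) s :=
  he.subst fun x u hx hu => by
    cases x with
    | zero =>
      cases hx
      exact hf
    | succ x => exact .ax hx hu

lemma headRed {a b : Expr} {t : PseudoType} (h : Types Γ a t) (hr : HeadRed a b) :
    Types Γ b t := by
  cases hr <;> obtain ⟨n, t', s, rfl, h₁, h₂⟩ := app_inv h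
  case beta =>
    obtain ⟨_, _, _, hu, he⟩ := lam_inv h₁
    obtain ⟨rfl, rfl, rfl⟩ := tbulletN_tarrow_inj hu
    exact he.subst0 h₂
  case fst =>
    obtain ⟨_, _, hv, hk⟩ := const_inv h₁
    cases hk
    obtain ⟨rfl, rfl, rfl⟩ := tbulletN_tarrow_inj hv
    exact (pair_inv h₂).1
  case snd =>
    obtain ⟨_, _, hv, hk⟩ := const_inv h₁
    cases hk
    obtain ⟨rfl, rfl, rfl⟩ := tbulletN_tarrow_inj hv
    exact (pair_inv h₂).2

lemma plug_replace {a b : Expr} (hab : ∀ u, Types Γ a u → Types Γ b u) (E : ECtx)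
    {t : PseudoType} (h : Types Γ (E.plug a) t) : Types Γ (E.plug b) t := by
  induction E generalizing t with
  | hole => exact hab t h
  | app _ _ ih =>
    obtain ⟨n, t', s, rfl, h₁, h₂⟩ := app_inv h
    exact .arrowE (ih h₁) h₂
  | fst _ ih | snd _ ih | succ _ ih =>
    obtain ⟨n, t', s, rfl, h₁, h₂⟩ := app_inv h
    exact .arrowE h₁ (ih h₂)

end Types

/-- Subject reduction: if `Γ ⊢ e : t` and `e ⟶ e'`
then `Γ ⊢ e' : t`. -/
theorem subject_reduction (Γ : Ctx) (e e' : Expr) (t : PseudoType)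
    (h : Types Γ e t) (hr : Red e e') : Types Γ e' t := by
  obtain ⟨E, a, b, hab, rfl, rfl⟩ := hr
  exact h.plug_replace (fun _ ha => ha.headRed hab) E

end LambdaBullet
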